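/- Consider a run of the preemptive greedy algorithm with parameter β > 0 on a finite simple graph G whose vertex enumeration v_1, …, v_n is an inductively k-independent ordering (k ≥ 1), with a monotone, normalized, submodular function f, producing the output set S_n. Then S_n is an independent set of G, and every independent set T of G satisfies f(T) ≤ (k(1+β) + 1)(1 + 1/β) · f(S_n). -/

import Mathlib

open Finset

/-- A set of vertices is independent if no two of its vertices are adjacent. -/
def IsIndep {n : ℕ} (G : SimpleGraph (Fin n)) (S : Finset (Fin n)) : Prop :=
  ∀ u ∈ S, ∀ v ∈ S, ¬ G.Adj u v

/-- `A_i`: the neighbors of `v_i` that come after `v_i` in the ordering. -/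
def laterNbrs {n : ℕ} (G : SimpleGraph (Fin n)) [DecidableRel G.Adj] (i : Fin n) :
    Finset (Fin n) :=
  Finset.univ.filter (fun j => G.Adj i j ∧ i < j)

/-- `B_i`: the neighbors of `v_i` that come before `v_i` in the ordering. -/
def earlierNbrs {n : ℕ} (G : SimpleGraph (Fin n)) [DecidableRel G.Adj] (i : Fin n) :
    Finset (Fin n) :=
  Finset.univ.filter (fun j => G.Adj i j ∧ j < i)

/-- The enumeration of `Fin n` (in its natural order) is an inductively `k`-independent
ordering of `G`. -/
def InductivelyKIndep {n : ℕ} (G : SimpleGraph (Fin n)) [DecidableRel G.Adj] (k : ℕ) : Prop :=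
  ∀ i : Fin n, ∀ S ⊆ laterNbrs G i, IsIndep G S → S.card ≤ k

/-- A set function is submodular. -/
def Submodular {V : Type*} [DecidableEq V] (f : Finset V → ℝ) : Prop :=
  ∀ A B : Finset V, f (A ∪ B) + f (A ∩ B) ≤ f A + f B

/-- The incremental value `ν_f(S, e) = f(S' ∪ {e}) - f(S')` where `S' = {s ∈ S : s < e}`. -/
def incv {V : Type*} [LinearOrder V] (f : Finset V → ℝ) (S : Finset V) (e : V) : ℝ :=
  f (insert e (S.filter (fun s => s < e))) - f (S.filter (fun s => s < e))

/-- The conflict set `C_i = N(v_i) ∩ S` of vertex `i` against the current set `S`. -/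
def conflictSet {n : ℕ} (G : SimpleGraph (Fin n)) [DecidableRel G.Adj] (i : Fin n)
    (S : Finset (Fin n)) : Finset (Fin n) :=
  S.filter (fun u => G.Adj i u)

/-- Step `i` of the preemptive greedy algorithm with parameter `β` is accepted:
`f_{S_{i-1}}(v_i) ≥ (1+β) ∑_{c ∈ C_i} ν_f(S_{i-1}, c)`, where `S_{i-1} = S i.val`. -/
def AcceptedStep {n : ℕ} (G : SimpleGraph (Fin n)) [DecidableRel G.Adj]
    (f : Finset (Fin n) → ℝ) (β : ℝ) (S : ℕ → Finset (Fin n)) (i : Fin n) : Prop :=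
  (1 + β) * ∑ c ∈ conflictSet G i (S i.val), incv f (S i.val) c ≤
    f (insert i (S i.val)) - f (S i.val)

/-- `S : ℕ → Finset (Fin n)` is a run of the preemptive greedy algorithm with parameter `β`:
`S 0 = ∅`, and at each step `i` the vertex `v_i` is accepted (replacing its conflict set) iff
its marginal value is at least `(1+β)` times the total incremental value of its conflicts. -/
def IsGreedyRun {n : ℕ} (G : SimpleGraph (Fin n)) [DecidableRel G.Adj]
    (f : Finset (Fin n) → ℝ) (β : ℝ) (S : ℕ → Finset (Fin n)) : Prop :=
  S 0 = ∅ ∧ ∀ i : Fin n,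
    (AcceptedStep G f β S i →
      S (i.val + 1) = (S i.val \ conflictSet G i (S i.val)) ∪ {i}) ∧
    (¬ AcceptedStep G f β S i → S (i.val + 1) = S i.val)

/-- `U`: the set of all elements ever (even momentarily) added to the current set. -/
def everAdded {n : ℕ} (S : ℕ → Finset (Fin n)) : Finset (Fin n) :=
  (Finset.range (n + 1)).biUnion S

/-!
Charge every vertex `c` the incremental value it has when it is evicted, or in the output `S n`
if it survives. An accepted vertex pays, with its own insertion value, `1 + β` times the charges
of the vertices it evicts, so the total evicted charge `E` satisfies `(1 + β) E ≤ E + f (S n)`,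
and the total charge `Φ = E + f (S n)` is at most `(1 + 1/β) f (S n)`. The set `U` of vertices
ever added has `f U ≤ Φ`; a vertex `t ∉ U` was rejected, so its marginal value over `U` is at
most `1 + β` times the charges of its conflict set. The conflict sets of an independent `T`
consist of earlier neighbours, so inductive `k`-independence charges each vertex at most `k`
times, and `f T ≤ f U + ∑_{t ∈ T \ U} f_U(t) ≤ (1 + k (1 + β)) Φ`.
-/

section Submodular

variable {V : Type*} [DecidableEq V] {f : Finset V → ℝ}

theorem Submodular.insert_sub_le_of_subset (hsub : Submodular f) {A B : Finset V} (hAB : A ⊆ B)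
    {c : V} (hc : c ∉ B) : f (insert c B) - f B ≤ f (insert c A) - f A := by
  have h := hsub (insert c A) B
  rw [insert_union, union_eq_right.2 hAB, insert_inter_of_notMem hc,
    inter_eq_left.2 hAB] at h
  linarith

theorem Submodular.union_le_add_sum_insert_sub (hsub : Submodular f) (A B : Finset V) :
    f (A ∪ B) ≤ f A + ∑ b ∈ B \ A, (f (insert b A) - f A) := by
  induction B using Finset.induction_on with
  | empty => simp
  | @insert b B hbB ih =>
    by_cases hbA : b ∈ A
    · rwa [union_insert, insert_eq_self.2 (mem_union_left B hbA), insert_sdiff_of_mem _ hbA]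
    · have hb : b ∉ A ∪ B := by simp [hbA, hbB]
      have hmarg := hsub.insert_sub_le_of_subset subset_union_left hb
      rw [union_insert, insert_sdiff_of_notMem _ hbA, sum_insert (by simp [hbB])]
      linarith

end Submodular

section IncrementalValue

variable {V : Type*} [LinearOrder V] {f : Finset V → ℝ}

theorem incv_nonneg (hf : Monotone f) (S : Finset V) (c : V) : 0 ≤ incv f S c :=
  sub_nonneg.2 (hf (subset_insert _ _))

theorem incv_le_incv_of_filter_subset (hsub : Submodular f) {A B : Finset V} {c : V}
    (h : A.filter (· < c) ⊆ B.filter (· < c)) : incv f B c ≤ incv f A c :=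
  hsub.insert_sub_le_of_subset h (by simp)

theorem incv_insert_of_lt {S : Finset V} {a c : V} (hca : c < a) :
    incv f (insert a S) c = incv f S c := by
  simp only [incv, filter_insert, hca.not_gt, if_false]

theorem sum_incv_self (hnorm : f ∅ = 0) (S : Finset V) : ∑ c ∈ S, incv f S c = f S := by
  induction S using Finset.induction_on_max with
  | empty => simp [hnorm]
  | insert a S hlt ih =>
    have haS : a ∉ S := fun h => (hlt a h).false
    have hfilter : (insert a S).filter (· < a) = S := by
      rw [filter_insert, if_neg (lt_irrefl a), filter_true_of_mem hlt]
    rw [sum_insert haS, sum_congr rfl fun c hc => incv_insert_of_lt (hlt c hc), ih, incv,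
      hfilter]
    ring

end IncrementalValue

theorem Nat.exists_between_and_not_succ {P : ℕ → Prop} {a b : ℕ} (hab : a ≤ b) (ha : P a)
    (hb : ¬ P b) : ∃ j, a ≤ j ∧ j < b ∧ P j ∧ ¬ P (j + 1) := by
  induction b, hab using Nat.le_induction with
  | base => exact absurd ha hb
  | succ b hab ih =>
    by_cases hPb : P b
    · exact ⟨b, hab, b.lt_succ_self, hPb, hb⟩
    · obtain ⟨j, haj, hjb, hj⟩ := ih hPb
      exact ⟨j, haj, hjb.trans b.lt_succ_self, hj⟩

section Growth

variable {n : ℕ} {S : ℕ → Finset (Fin n)}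
  (hS : ∀ i : Fin n, S (i.val + 1) ⊆ insert i (S i.val))
include hS

theorem val_lt_of_mem_of_succ_subset (h0 : S 0 = ∅) {m : ℕ} (hm : m ≤ n) {c : Fin n}
    (hc : c ∈ S m) : c.val < m := by
  induction m with
  | zero => simp [h0] at hc
  | succ m ih =>
    rcases mem_insert.1 (hS ⟨m, hm⟩ hc) with rfl | hc
    · exact m.lt_succ_self
    · exact (ih (by omega) hc).trans m.lt_succ_self

theorem mem_of_mem_of_succ_subset {m m' : ℕ} (hmm' : m ≤ m') (hm' : m' ≤ n) {c : Fin n}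
    (hcm : c.val < m) (hc : c ∈ S m') : c ∈ S m := by
  induction m', hmm' using Nat.le_induction with
  | base => exact hc
  | succ m' hmm' ih =>
    rcases mem_insert.1 (hS ⟨m', hm'⟩ hc) with rfl | hc
    · exact absurd hcm (by simpa using hmm')
    · exact ih (by omega) hc

theorem incv_le_incv_of_succ_subset {f : Finset (Fin n) → ℝ} (hsub : Submodular f) {m m' : ℕ}
    (hmm' : m ≤ m') (hm' : m' ≤ n) {c : Fin n} (hcm : c.val < m) :
    incv f (S m) c ≤ incv f (S m') c := by
  refine incv_le_incv_of_filter_subset hsub fun x hx => ?_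
  rw [mem_filter] at hx ⊢
  exact ⟨mem_of_mem_of_succ_subset hS hmm' hm' (lt_trans hx.2 hcm) hx.1, hx.2⟩

end Growth

section GreedyRun

variable {n : ℕ} {G : SimpleGraph (Fin n)} [DecidableRel G.Adj] {f : Finset (Fin n) → ℝ}
  {β : ℝ} {S : ℕ → Finset (Fin n)}

theorem IsGreedyRun.succ_subset_insert (hrun : IsGreedyRun G f β S) (i : Fin n) :
    S (i.val + 1) ⊆ insert i (S i.val) := by
  by_cases hacc : AcceptedStep G f β S i
  · rw [(hrun.2 i).1 hacc, union_singleton]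
    exact insert_subset_insert _ sdiff_subset
  · rw [(hrun.2 i).2 hacc]
    exact subset_insert _ _

theorem IsGreedyRun.val_lt_of_mem (hrun : IsGreedyRun G f β S) {m : ℕ} (hm : m ≤ n)
    {c : Fin n} (hc : c ∈ S m) : c.val < m :=
  val_lt_of_mem_of_succ_subset hrun.succ_subset_insert hrun.1 hm hc

theorem IsGreedyRun.notMem_self (hrun : IsGreedyRun G f β S) (i : Fin n) : i ∉ S i.val :=
  fun h => lt_irrefl _ (hrun.val_lt_of_mem i.isLt.le h)

theorem IsGreedyRun.isIndep (hrun : IsGreedyRun G f β S) {m : ℕ} (hm : m ≤ n) :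
    IsIndep G (S m) := by
  induction m with
  | zero => simp [hrun.1, IsIndep]
  | succ m ih =>
    set i : Fin n := ⟨m, hm⟩
    have hind := ih (by omega)
    by_cases hacc : AcceptedStep G f β S i
    · rw [show m + 1 = i.val + 1 from rfl, (hrun.2 i).1 hacc]
      intro u hu v hv
      simp only [conflictSet, mem_union, mem_sdiff, mem_filter, mem_singleton, not_and] at hu hv
      rcases hu with ⟨hu, hiu⟩ | rfl <;> rcases hv with ⟨hv, hiv⟩ | rfl
      · exact hind u hu v hv
      · exact fun h => hiu hu h.symm
      · exact hiv hv
      · exact G.irrefl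
    · rwa [show m + 1 = i.val + 1 from rfl, (hrun.2 i).2 hacc]

theorem IsGreedyRun.mem_succ_of_acceptedStep (hrun : IsGreedyRun G f β S) {i : Fin n}
    (hacc : AcceptedStep G f β S i) : i ∈ S (i.val + 1) := by
  rw [(hrun.2 i).1 hacc]
  exact mem_union_right _ (mem_singleton_self i)

theorem IsGreedyRun.sdiff_succ_of_acceptedStep (hrun : IsGreedyRun G f β S) {i : Fin n}
    (hacc : AcceptedStep G f β S i) : S i.val \ S (i.val + 1) = conflictSet G i (S i.val) := by
  have hi := hrun.notMem_self i
  rw [(hrun.2 i).1 hacc]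
  ext x
  simp only [conflictSet, mem_sdiff, mem_union, mem_filter, mem_singleton]
  grind

theorem IsGreedyRun.filter_lt_succ_of_acceptedStep (hrun : IsGreedyRun G f β S) {i : Fin n}
    (hacc : AcceptedStep G f β S i) :
    (S (i.val + 1)).filter (· < i) = S i.val \ conflictSet G i (S i.val) := by
  rw [(hrun.2 i).1 hacc, filter_union, filter_singleton, if_neg (lt_irrefl i), union_empty,
    filter_true_of_mem]
  exact fun x hx => hrun.val_lt_of_mem i.isLt.le (mem_sdiff.1 hx).1

theorem IsGreedyRun.mul_sum_incv_conflictSet_le (hrun : IsGreedyRun G f β S)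
    (hsub : Submodular f) {i : Fin n} (hacc : AcceptedStep G f β S i) :
    (1 + β) * ∑ c ∈ conflictSet G i (S i.val), incv f (S i.val) c ≤
      incv f (S (i.val + 1)) i := by
  rw [incv, hrun.filter_lt_succ_of_acceptedStep hacc]
  exact hacc.trans (hsub.insert_sub_le_of_subset sdiff_subset (hrun.notMem_self i))

theorem subset_everAdded {m : ℕ} (hm : m ≤ n) : S m ⊆ everAdded S :=
  subset_biUnion_of_mem S (mem_range.2 (Nat.lt_succ_of_le hm))

theorem IsGreedyRun.mem_succ_of_mem_everAdded (hrun : IsGreedyRun G f β S) {u : Fin n}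
    (hu : u ∈ everAdded S) : u ∈ S (u.val + 1) := by
  obtain ⟨m, hm, hum⟩ := mem_biUnion.1 hu
  have hm : m ≤ n := Nat.lt_succ_iff.1 (mem_range.1 hm)
  exact mem_of_mem_of_succ_subset hrun.succ_subset_insert (hrun.val_lt_of_mem hm hum) hm
    u.val.lt_succ_self hum

end GreedyRun

theorem InductivelyKIndep.sum_sum_le {n k : ℕ} {G : SimpleGraph (Fin n)} [DecidableRel G.Adj]
    (hG : InductivelyKIndep G k) {T : Finset (Fin n)} (hT : IsIndep G T)
    {C : Fin n → Finset (Fin n)} (hC : ∀ t, C t ⊆ earlierNbrs G t) {g : Fin n → ℝ}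
    (hg : ∀ c, 0 ≤ g c) : ∑ t ∈ T, ∑ c ∈ C t, g c ≤ k * ∑ c, g c := by
  have hcard (c : Fin n) : (#(T.filter (c ∈ C ·)) : ℝ) ≤ k := by
    refine Nat.cast_le.2 (hG c _ (fun t ht => ?_) fun u hu v hv => ?_)
    · obtain ⟨-, hct⟩ := mem_filter.1 ht
      obtain ⟨-, htc, hlt⟩ := mem_filter.1 (hC t hct)
      exact mem_filter.2 ⟨mem_univ t, htc.symm, hlt⟩
    · exact hT u (mem_filter.1 hu).1 v (mem_filter.1 hv).1
  calc ∑ t ∈ T, ∑ c ∈ C t, g c = ∑ c, ∑ t ∈ T.filter (c ∈ C ·), g c :=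
        sum_comm' fun t c => by simp
    _ ≤ ∑ c, (k : ℝ) * g c := by
        refine sum_le_sum fun c _ => ?_
        rw [sum_const, nsmul_eq_mul]
        exact mul_le_mul_of_nonneg_right (hcard c) (hg c)
    _ = k * ∑ c, g c := (mul_sum _ _ _).symm

section Charge

variable {n : ℕ} {G : SimpleGraph (Fin n)} [DecidableRel G.Adj] {f : Finset (Fin n) → ℝ}
  {β : ℝ} {S : ℕ → Finset (Fin n)}

-- Summing over all steps spares us naming the (unique) step that evicts `c`.
def charge (f : Finset (Fin n) → ℝ) (S : ℕ → Finset (Fin n)) (c : Fin n) : ℝ :=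
  (∑ j : Fin n, if c ∈ S j.val \ S (j.val + 1) then incv f (S j.val) c else 0) +
    if c ∈ S n then incv f (S n) c else 0

theorem charge_nonneg (hf : Monotone f) (c : Fin n) : 0 ≤ charge f S c :=
  add_nonneg (sum_nonneg fun _ _ => ite_nonneg (incv_nonneg hf _ _) le_rfl)
    (ite_nonneg (incv_nonneg hf _ _) le_rfl)

theorem sum_charge (hnorm : f ∅ = 0) :
    ∑ c, charge f S c =
      ∑ j : Fin n, ∑ c ∈ S j.val \ S (j.val + 1), incv f (S j.val) c + f (S n) := by
  simp only [charge, sum_add_distrib, ← sum_incv_self hnorm (S n)]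
  rw [sum_comm]
  simp only [sum_ite_mem, univ_inter]

theorem IsGreedyRun.incv_le_charge (hrun : IsGreedyRun G f β S) (hsub : Submodular f)
    (hf : Monotone f) {m : ℕ} (hm : m ≤ n) {c : Fin n} (hc : c ∈ S m) :
    incv f (S m) c ≤ charge f S c := by
  have hcm := hrun.val_lt_of_mem hm hc
  have hterm (j : Fin n) :
      0 ≤ if c ∈ S j.val \ S (j.val + 1) then incv f (S j.val) c else 0 :=
    ite_nonneg (incv_nonneg hf _ _) le_rfl
  by_cases hcn : c ∈ S n
  · have := incv_le_incv_of_succ_subset hrun.succ_subset_insert hsub hm le_rfl hcm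
    rw [charge, if_pos hcn]
    linarith [sum_nonneg fun j (_ : j ∈ univ) => hterm j]
  · obtain ⟨j, hmj, hjn, hcj, hcj'⟩ :=
      Nat.exists_between_and_not_succ (P := (c ∈ S ·)) hm hc hcn
    have hevict := single_le_sum (fun j _ => hterm j) (mem_univ (⟨j, hjn⟩ : Fin n))
    rw [if_pos (mem_sdiff.2 ⟨hcj, hcj'⟩)] at hevict
    have := incv_le_incv_of_succ_subset hrun.succ_subset_insert hsub hmj hjn.le hcm
    rw [charge, if_neg hcn]
    linarith

theorem IsGreedyRun.mul_sum_incv_sdiff_succ_le_charge (hrun : IsGreedyRun G f β S)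
    (hsub : Submodular f) (hf : Monotone f) (j : Fin n) :
    (1 + β) * ∑ c ∈ S j.val \ S (j.val + 1), incv f (S j.val) c ≤ charge f S j := by
  by_cases hacc : AcceptedStep G f β S j
  · rw [hrun.sdiff_succ_of_acceptedStep hacc]
    exact (hrun.mul_sum_incv_conflictSet_le hsub hacc).trans
      (hrun.incv_le_charge hsub hf j.isLt (hrun.mem_succ_of_acceptedStep hacc))
  · simpa [(hrun.2 j).2 hacc] using charge_nonneg hf j

theorem IsGreedyRun.sum_charge_le (hrun : IsGreedyRun G f β S) (hsub : Submodular f)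
    (hf : Monotone f) (hnorm : f ∅ = 0) (hβ : 0 < β) :
    ∑ c, charge f S c ≤ (1 + 1 / β) * f (S n) := by
  set E := ∑ j : Fin n, ∑ c ∈ S j.val \ S (j.val + 1), incv f (S j.val) c
  have hE : (1 + β) * E ≤ E + f (S n) := by
    rw [← sum_charge hnorm, mul_sum]
    exact sum_le_sum fun j _ => hrun.mul_sum_incv_sdiff_succ_le_charge hsub hf j
  have hEβ : E ≤ f (S n) / β := by
    rw [le_div_iff₀ hβ]
    linarith
  rw [sum_charge hnorm, add_mul, one_mul, one_div_mul_eq_div]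
  linarith

theorem IsGreedyRun.apply_everAdded_le_sum_charge (hrun : IsGreedyRun G f β S)
    (hsub : Submodular f) (hf : Monotone f) (hnorm : f ∅ = 0) :
    f (everAdded S) ≤ ∑ c, charge f S c := by
  set U := everAdded S
  calc f U = ∑ u ∈ U, incv f U u := (sum_incv_self hnorm U).symm
    _ ≤ ∑ u ∈ U, charge f S u := sum_le_sum fun u hu => by
        have hu' := hrun.mem_succ_of_mem_everAdded hu
        refine le_trans ?_ (hrun.incv_le_charge hsub hf u.isLt hu')
        refine incv_le_incv_of_filter_subset hsub (filter_subset_filter _ ?_)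
        exact subset_everAdded u.isLt
    _ ≤ ∑ c, charge f S c :=
        sum_le_sum_of_subset_of_nonneg (subset_univ U) fun c _ _ => charge_nonneg hf c

theorem IsGreedyRun.conflictSet_subset_earlierNbrs (hrun : IsGreedyRun G f β S) (t : Fin n) :
    conflictSet G t (S t.val) ⊆ earlierNbrs G t := fun c hc => by
  obtain ⟨hcS, hadj⟩ := mem_filter.1 hc
  exact mem_filter.2 ⟨mem_univ c, hadj, hrun.val_lt_of_mem t.isLt.le hcS⟩

theorem IsGreedyRun.insert_sub_le_of_notMem_everAdded (hrun : IsGreedyRun G f β S)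
    (hsub : Submodular f) (hf : Monotone f) (hβ : 0 ≤ 1 + β) {t : Fin n}
    (ht : t ∉ everAdded S) :
    f (insert t (everAdded S)) - f (everAdded S) ≤
      (1 + β) * ∑ c ∈ conflictSet G t (S t.val), charge f S c := by
  have hrej : ¬ AcceptedStep G f β S t := fun hacc =>
    ht (subset_everAdded t.isLt (hrun.mem_succ_of_acceptedStep hacc))
  have hcharge : ∑ c ∈ conflictSet G t (S t.val), incv f (S t.val) c ≤
      ∑ c ∈ conflictSet G t (S t.val), charge f S c :=
    sum_le_sum fun c hc => hrun.incv_le_charge hsub hf t.isLt.le (mem_filter.1 hc).1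
  calc f (insert t (everAdded S)) - f (everAdded S) ≤ f (insert t (S t.val)) - f (S t.val) :=
        hsub.insert_sub_le_of_subset (subset_everAdded t.isLt.le) ht
    _ ≤ (1 + β) * ∑ c ∈ conflictSet G t (S t.val), incv f (S t.val) c := (not_le.1 hrej).le
    _ ≤ _ := mul_le_mul_of_nonneg_left hcharge hβ

end Charge

theorem preemptive_greedy_guarantee_general {n k : ℕ}
    (G : SimpleGraph (Fin n)) [DecidableRel G.Adj]
    (hG : InductivelyKIndep G k)
    (f : Finset (Fin n) → ℝ) (hsub : Submodular f)
    (hmono : ∀ A B : Finset (Fin n), A ⊆ B → f A ≤ f B) (hnorm : f ∅ = 0)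
    (β : ℝ) (hβ : 0 < β)
    (S : ℕ → Finset (Fin n)) (hrun : IsGreedyRun G f β S) :
    IsIndep G (S n) ∧
    ∀ T : Finset (Fin n), IsIndep G T →
      f T ≤ (k * (1 + β) + 1) * (1 + 1 / β) * f (S n) := by
  have hf : Monotone f := fun A B => hmono A B
  refine ⟨hrun.isIndep le_rfl, fun T hT => ?_⟩
  set U := everAdded S
  set Φ := ∑ c, charge f S c
  have hrejected : ∑ t ∈ T \ U, (f (insert t U) - f U) ≤ (1 + β) * (k * Φ) :=
    calc _ ≤ ∑ t ∈ T \ U, (1 + β) * ∑ c ∈ conflictSet G t (S t.val), charge f S c :=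
          sum_le_sum fun t ht =>
            hrun.insert_sub_le_of_notMem_everAdded hsub hf (by linarith) (mem_sdiff.1 ht).2
      _ ≤ (1 + β) * (k * Φ) := by
          rw [← mul_sum]
          refine mul_le_mul_of_nonneg_left (hG.sum_sum_le (fun u hu v hv => ?_)
            hrun.conflictSet_subset_earlierNbrs (charge_nonneg hf)) (by linarith)
          exact hT u (mem_sdiff.1 hu).1 v (mem_sdiff.1 hv).1
  calc f T ≤ f (U ∪ T) := hmono _ _ subset_union_right
    _ ≤ f U + ∑ t ∈ T \ U, (f (insert t U) - f U) := hsub.union_le_add_sum_insert_sub U T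
    _ ≤ (k * (1 + β) + 1) * Φ := by
        linarith [hrun.apply_everAdded_le_sum_charge hsub hf hnorm]
    _ ≤ (k * (1 + β) + 1) * ((1 + 1 / β) * f (S n)) :=
        mul_le_mul_of_nonneg_left (hrun.sum_charge_le hsub hf hnorm hβ) (by positivity)
    _ = _ := (mul_assoc _ _ _).symm

/-- Approximation guarantee of preemptive greedy: the output `S_n` is an independent set of
`G`, and every independent set `T` satisfies `f(T) ≤ (k(1+β) + 1)(1 + 1/β) f(S_n)`. -/
theorem preemptive_greedy_guarantee {n k : ℕ} (hk : 1 ≤ k)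
    (G : SimpleGraph (Fin n)) [DecidableRel G.Adj]
    (hG : InductivelyKIndep G k)
    (f : Finset (Fin n) → ℝ) (hsub : Submodular f)
    (hmono : ∀ A B : Finset (Fin n), A ⊆ B → f A ≤ f B) (hnorm : f ∅ = 0)
    (β : ℝ) (hβ : 0 < β)
    (S : ℕ → Finset (Fin n)) (hrun : IsGreedyRun G f β S) :
    IsIndep G (S n) ∧
    ∀ T : Finset (Fin n), IsIndep G T →
      f T ≤ (k * (1 + β) + 1) * (1 + 1 / β) * f (S n) :=
  preemptive_greedy_guarantee_general G hG f hsub hmono hnorm β hβ S hrun
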